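/- Let the k-plane E vary over the skew Schubert cell E_{210,110} in G(3,7) with coordinates a,...,g, with rightmost entries c, e, g in its three rows, and let G_μ be the coordinate 4-plane spanned by e_1, e_2, e_3, e_6. Then the vanishing locus of det[E_{210,110}; G_μ] = c·e·g inside the cell decomposes as the union of the loci {c = 0} ∪ {g = 0} after row reduction; geometrically, Y_{210,110} ∩ Y_□G_μ = Y_{210,210} ∪ Y_{210,111}. -/

import Mathlib

/-- The "top" coordinate flag in ℂ⁷: F j is spanned by the last j standard basis vectors. -/
noncomputable def Ftop (j : ℕ) : Submodule ℂ (Fin 7 → ℂ) :=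
  Submodule.span ℂ ((fun t : Fin 7 => Pi.single t (1 : ℂ)) '' {t : Fin 7 | 7 - j ≤ (t : ℕ)})

/-- The "bottom" coordinate flag in ℂ⁷: F' j is spanned by the first j standard basis vectors. -/
noncomputable def Fbot (j : ℕ) : Submodule ℂ (Fin 7 → ℂ) :=
  Submodule.span ℂ ((fun t : Fin 7 => Pi.single t (1 : ℂ)) '' {t : Fin 7 | (t : ℕ) < j})

/-- The Schubert conditions (for G(3,7), so n−k = 4) for a partition λ and a flag F. -/
def SchubCond (F : ℕ → Submodule ℂ (Fin 7 → ℂ)) (lam : Fin 3 → ℕ)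
    (E : Submodule ℂ (Fin 7 → ℂ)) : Prop :=
  ∀ i : Fin 3, (i : ℕ) + 1 ≤ Module.finrank ℂ ↥(E ⊓ F (4 + ((i : ℕ) + 1) - lam i))

/-- The skew Schubert variety Y_{λ,μ} = Y_λF_• ∩ Y_μF'_• in G(3,7). -/
noncomputable def Yskew (lam mu : Fin 3 → ℕ) : Set (Submodule ℂ (Fin 7 → ℂ)) :=
  {E | Module.finrank ℂ E = 3 ∧ SchubCond Ftop lam E ∧ SchubCond Fbot mu E}

/-- The coordinate 4-plane G_μ = span{e₁, e₂, e₃, e₆} (1-based; 0-based {0,1,2,5}). -/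
noncomputable def Gmu : Submodule ℂ (Fin 7 → ℂ) :=
  Submodule.span ℂ ((fun t : Fin 7 => Pi.single t (1 : ℂ)) '' ({0, 1, 2, 5} : Set (Fin 7)))

/-! On the cell, a vector `∑ xᵢ rᵢ` of the row space lies in `G_μ` iff its coordinates 4, 5, 7
(1-based) vanish, i.e. `x` lies in the left kernel of the minor on these columns, whose
determinant is `c·e·g`; the rows are independent because the minor on columns 1, 3, 5 is
unitriangular.

On the varieties, `dim (E ∩ F'₅) ≥ 2` for `E ∈ Y_{210,110}`. A nonzero `w ∈ E ∩ G_μ` either lies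
in `F'₅`, hence in `G_μ ∩ F'₅ = F'₃`, or spans `E` together with `E ∩ F'₅`, which forces
`E ⊆ G_μ + F'₅ = F'₆`. Conversely `F'₃ ⊆ G_μ`, and a 3-plane and a 4-plane inside `F'₆` meet. -/

open Module Submodule
open scoped Matrix

section CoordinateSubspaces

variable {K ι : Type*} [Semiring K]

theorem span_single_image_eq_spanSubset [Finite ι] [DecidableEq ι] (S : Set ι) :
    span K ((fun t => Pi.single t (1 : K)) '' S) = Pi.spanSubset K S := by
  simp only [Pi.spanSubset, Pi.basisFun_apply]

theorem Pi.spanSubset_inf [Finite ι] (S T : Set ι) :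
    Pi.spanSubset K S ⊓ Pi.spanSubset K T = Pi.spanSubset K (S ∩ T) := by
  ext x
  simp only [mem_inf, Pi.mem_spanSubset_iff, Set.mem_inter_iff, not_and_or]
  grind

theorem Pi.spanSubset_sup [Finite ι] (S T : Set ι) :
    Pi.spanSubset K S ⊔ Pi.spanSubset K T = Pi.spanSubset K (S ∪ T) := by
  simp only [Pi.spanSubset, Set.image_union, span_union]

end CoordinateSubspaces

section Dimension

variable {K V : Type*} [DivisionRing K] [AddCommGroup V] [Module K V]

theorem Submodule.finrank_le_finrank_inf_iff {E F : Submodule K V} [FiniteDimensional K E] :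
    finrank K E ≤ finrank K ↥(E ⊓ F) ↔ E ≤ F :=
  ⟨fun h => inf_eq_left.1 (eq_of_le_of_finrank_le inf_le_left h), fun h => by rw [inf_eq_left.2 h]⟩

theorem Submodule.inf_ne_bot_of_finrank_lt_add {E G H : Submodule K V} [FiniteDimensional K H]
    (hE : E ≤ H) (hG : G ≤ H) (h : finrank K H < finrank K E + finrank K G) : E ⊓ G ≠ ⊥ := by
  have := finiteDimensional_of_le hE
  have := finiteDimensional_of_le hG
  intro hbot
  have hsum := finrank_sup_add_finrank_inf_eq E G
  have hsup := finrank_mono (sup_le hE hG)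
  rw [hbot, finrank_bot] at hsum
  omega

theorem Submodule.inf_inf_ne_bot_or_le_sup {E G P : Submodule K V} [FiniteDimensional K E]
    (hP : finrank K E ≤ finrank K ↥(E ⊓ P) + 1) (hG : E ⊓ G ≠ ⊥) :
    E ⊓ (G ⊓ P) ≠ ⊥ ∨ E ≤ G ⊔ P := by
  obtain ⟨w, ⟨hwE, hwG⟩, hw0⟩ := exists_mem_ne_zero_of_ne_bot hG
  by_cases hwP : w ∈ P
  · exact .inl ((Submodule.ne_bot_iff _).2 ⟨w, ⟨hwE, hwG, hwP⟩, hw0⟩)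
  right
  have hle : E ⊓ P ⊔ K ∙ w ≤ E := sup_le inf_le_left ((span_singleton_le_iff_mem w E).2 hwE)
  have hlt : E ⊓ P < E ⊓ P ⊔ K ∙ w :=
    left_lt_sup.2 fun h => hwP (h (mem_span_singleton_self w)).2
  have := finiteDimensional_of_le hle
  have heq : E ⊓ P ⊔ K ∙ w = E := by
    refine eq_of_le_of_finrank_eq hle ?_
    have := finrank_lt_finrank_of_lt hlt
    have := finrank_mono hle
    omega
  rw [← heq]
  exact sup_le (inf_le_right.trans le_sup_right)
    ((span_singleton_le_iff_mem w _).2 (mem_sup_left hwG))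

end Dimension

section RowSpaces

variable {K m ι : Type*} [Field K] [Fintype m] [DecidableEq m]

theorem Matrix.linearIndependent_row_of_det_submatrix_ne_zero (M : Matrix m ι K) (σ : m → ι)
    (h : (M.submatrix id σ).det ≠ 0) : LinearIndependent K M.row :=
  .of_comp (LinearMap.funLeft K K σ) <|
    Matrix.linearIndependent_rows_iff_isUnit.2 <| (Matrix.isUnit_iff_isUnit_det _).2 h.isUnit

theorem Matrix.span_range_inf_spanSubset_ne_bot_iff [Finite ι]
    (M : Matrix m ι K) (hM : LinearIndependent K M.row) {S : Set ι} {σ : m → ι}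
    (hσ : Set.range σ = Sᶜ) :
    span K (Set.range M) ⊓ Pi.spanSubset K S ≠ ⊥ ↔ (M.submatrix id σ).det = 0 := by
  have hS (v : m → K) : v ᵥ* M ∈ Pi.spanSubset K S ↔ v ᵥ* M.submatrix id σ = 0 := by
    rw [Pi.mem_spanSubset_iff, ← compl_compl S, ← hσ, funext_iff]
    simp only [Set.mem_compl_iff, not_not, Set.forall_mem_range, Pi.zero_apply]
    rfl
  rw [← Matrix.exists_vecMul_eq_zero_iff, Submodule.ne_bot_iff]
  constructor
  · rintro ⟨x, ⟨hx, hxS⟩, hx0⟩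
    obtain ⟨v, rfl⟩ := (mem_span_range_iff_exists_fun K).1 hx
    rw [← Matrix.vecMul_eq_sum] at hxS hx0
    exact ⟨v, fun hv => hx0 (by simp [hv]), (hS v).1 hxS⟩
  · rintro ⟨v, hv0, hv⟩
    refine ⟨v ᵥ* M, ⟨?_, (hS v).2 hv⟩, fun h => hv0 ?_⟩
    · exact (mem_span_range_iff_exists_fun K).2 ⟨v, (Matrix.vecMul_eq_sum v M).symm⟩
    · exact funext (Fintype.linearIndependent_iff.1 hM v ((Matrix.vecMul_eq_sum v M).symm.trans h))

end RowSpaces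

theorem Fbot_eq (j : ℕ) : Fbot j = Pi.spanSubset ℂ {t : Fin 7 | (t : ℕ) < j} :=
  span_single_image_eq_spanSubset _

theorem Gmu_eq : Gmu = Pi.spanSubset ℂ ({0, 1, 2, 5} : Set (Fin 7)) :=
  span_single_image_eq_spanSubset _

theorem Gmu_inf_Fbot_five : Gmu ⊓ Fbot 5 = Fbot 3 := by
  rw [Gmu_eq, Fbot_eq, Fbot_eq, Pi.spanSubset_inf]
  congr 1
  ext t
  fin_cases t <;> simp

theorem Gmu_sup_Fbot_five : Gmu ⊔ Fbot 5 = Fbot 6 := by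
  rw [Gmu_eq, Fbot_eq, Fbot_eq, Pi.spanSubset_sup]
  congr 1
  ext t
  fin_cases t <;> simp

theorem Fbot_seven : Fbot 7 = ⊤ := by
  rw [Fbot_eq, eq_top_iff]
  exact fun _ _ => Pi.mem_spanSubset_iff.2 fun i hi => absurd i.isLt hi

theorem Fbot_mono : Monotone Fbot :=
  fun _ _ hij => span_mono (Set.image_mono fun _ ht => lt_of_lt_of_le ht hij)

theorem finrank_Gmu : finrank ℂ Gmu = 4 := by
  rw [Gmu_eq, Pi.dim_spanSubset, Set.ncard_eq_toFinset_card']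
  rfl

theorem finrank_Fbot_six : finrank ℂ (Fbot 6) = 6 := by
  rw [Fbot_eq, Pi.dim_spanSubset, Set.ncard_eq_toFinset_card']
  rfl

theorem schubCond_iff (F : ℕ → Submodule ℂ (Fin 7 → ℂ)) (l₀ l₁ l₂ : ℕ)
    (E : Submodule ℂ (Fin 7 → ℂ)) :
    SchubCond F ![l₀, l₁, l₂] E ↔ 1 ≤ finrank ℂ ↥(E ⊓ F (5 - l₀)) ∧
      2 ≤ finrank ℂ ↥(E ⊓ F (6 - l₁)) ∧ 3 ≤ finrank ℂ ↥(E ⊓ F (7 - l₂)) :=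
  ⟨fun h => ⟨h 0, h 1, h 2⟩, fun ⟨h0, h1, h2⟩ i => by fin_cases i <;> assumption⟩

theorem schubCond_Fbot_110_and_inf_Gmu_iff {E : Submodule ℂ (Fin 7 → ℂ)} (hE : finrank ℂ E = 3) :
    SchubCond Fbot ![1, 1, 0] E ∧ 1 ≤ finrank ℂ ↥(E ⊓ Gmu) ↔
      SchubCond Fbot ![2, 1, 0] E ∨ SchubCond Fbot ![1, 1, 1] E := by
  have hE6 : 3 ≤ finrank ℂ ↥(E ⊓ Fbot 6) ↔ E ≤ Fbot 6 := hE ▸ finrank_le_finrank_inf_iff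
  simp only [schubCond_iff, Nat.reduceSub]
  rw [Fbot_seven, inf_top_eq, hE, hE6]
  simp only [le_refl, and_true, Submodule.one_le_finrank_iff]
  constructor
  · rintro ⟨⟨h4, h5⟩, hG⟩
    rcases inf_inf_ne_bot_or_le_sup (P := Fbot 5) (by omega) hG with h3 | h6
    · exact .inl ⟨Gmu_inf_Fbot_five ▸ h3, h5⟩
    · exact .inr ⟨h4, h5, Gmu_sup_Fbot_five ▸ h6⟩
  · rintro (⟨h3, h5⟩ | ⟨h4, h5, h6⟩)
    · have h3G : Fbot 3 ≤ Gmu := Gmu_inf_Fbot_five ▸ inf_le_left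
      exact ⟨⟨ne_bot_of_le_ne_bot h3 (inf_le_inf_left E (Fbot_mono (by norm_num))), h5⟩,
        ne_bot_of_le_ne_bot h3 (inf_le_inf_left E h3G)⟩
    · refine ⟨⟨h4, h5⟩, inf_ne_bot_of_finrank_lt_add h6 (Gmu_sup_Fbot_five ▸ le_sup_left) ?_⟩
      rw [finrank_Fbot_six, finrank_Gmu, hE]
      norm_num

/-- On the skew Schubert cell E_{210,110} in G(3,7) with coordinates a,…,g, the condition
of meeting G_μ = span{e₁,e₂,e₃,e₆} nontrivially is the vanishing of det[E;G_μ] = c·e·g;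
geometrically, Y_{210,110} ∩ Y_□G_μ = Y_{210,210} ∪ Y_{210,111}. -/
theorem pieri_degeneration_G37 :
    (∀ a b c d e f g : ℂ,
      1 ≤ Module.finrank ℂ
          ↥(Submodule.span ℂ (Set.range
              (!![1, a, b, c, 0, 0, 0;
                  0, 0, 1, d, e, 0, 0;
                  0, 0, 0, 0, 1, f, g] : Matrix (Fin 3) (Fin 7) ℂ)) ⊓ Gmu)
        ↔ c * e * g = 0) ∧
    Yskew ![2, 1, 0] ![1, 1, 0] ∩ {E | 1 ≤ Module.finrank ℂ ↥(E ⊓ Gmu)}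
      = Yskew ![2, 1, 0] ![2, 1, 0] ∪ Yskew ![2, 1, 0] ![1, 1, 1] := by
  refine ⟨fun a b c d e f g => ?_, ?_⟩
  · set M : Matrix (Fin 3) (Fin 7) ℂ :=
      !![1, a, b, c, 0, 0, 0; 0, 0, 1, d, e, 0, 0; 0, 0, 0, 0, 1, f, g]
    have hM : LinearIndependent ℂ M.row :=
      M.linearIndependent_row_of_det_submatrix_ne_zero ![0, 2, 4] (by simp [M, Matrix.det_fin_three])
    have hσ : Set.range ![(3 : Fin 7), 4, 6] = ({0, 1, 2, 5} : Set (Fin 7))ᶜ := by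
      ext t
      fin_cases t <;> simp
    rw [one_le_finrank_iff, Gmu_eq, M.span_range_inf_spanSubset_ne_bot_iff hM hσ]
    simp [M, Matrix.det_fin_three]
  · ext E
    simp only [Yskew, Set.mem_inter_iff, Set.mem_union, Set.mem_ofPred_eq]
    by_cases hE : finrank ℂ E = 3
    · have := schubCond_Fbot_110_and_inf_Gmu_iff hE
      tauto
    · simp [hE]
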